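/- arXiv:1812.00710 — 2 statements merged into one kernel-verified Lean document; each statement's English description precedes it below -/
import Mathlib

section
/- Let M be a real symmetric n×n matrix (n ≥ 2) with Frobenius norm ‖M‖ and trace H = tr(M), and let λ be an eigenvalue of M of maximal absolute value. Then ‖M‖² ≥ (1 + 1/n) λ² − H². -/
open Matrix

theorem stmt_10 (n : ℕ) (hn : 2 ≤ n) (M : Matrix (Fin n) (Fin n) ℝ)
    (hM : M.IsSymm) (lam : ℝ)
    (hev : ∃ v : Fin n → ℝ, v ≠ 0 ∧ M.mulVec v = lam • v)
    (hmax : ∀ mu : ℝ, (∃ v : Fin n → ℝ, v ≠ 0 ∧ M.mulVec v = mu • v) → |mu| ≤ |lam|) :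
    ∑ i, ∑ j, (M i j) ^ 2 ≥ (1 + 1 / (n : ℝ)) * lam ^ 2 - M.trace ^ 2 := by
  have hH : M.IsHermitian := hM
  set μ : Fin n → ℝ := hH.eigenvalues with hμ
  set U : Matrix (Fin n) (Fin n) ℝ := (hH.eigenvectorUnitary : Matrix (Fin n) (Fin n) ℝ) with hU
  have hUU : star U * U = 1 := Matrix.mem_unitaryGroup_iff'.mp hH.eigenvectorUnitary.2
  have hUU' : U * star U = 1 := Matrix.mem_unitaryGroup_iff.mp hH.eigenvectorUnitary.2
  have hspec : M = U * diagonal μ * star U := by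
    simpa using hH.spectral_theorem
  have htr : M.trace = ∑ i, μ i := by
    rw [hspec, trace_mul_cycle, hUU, one_mul, trace_diagonal]
  have hdd : diagonal μ * diagonal μ = diagonal fun i => μ i ^ 2 := by
    rw [diagonal_mul_diagonal]; congr 1; ext i; ring
  have hMM : M * M = U * diagonal (fun i => μ i ^ 2) * star U := by
    rw [hspec]
    calc U * diagonal μ * star U * (U * diagonal μ * star U)
        = U * diagonal μ * (star U * U) * (diagonal μ * star U) := by
          simp only [Matrix.mul_assoc]
      _ = U * (diagonal μ * diagonal μ) * star U := by
          rw [hUU]; simp only [Matrix.mul_one, Matrix.mul_assoc]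
      _ = U * diagonal (fun i => μ i ^ 2) * star U := by rw [hdd]
  have hsq : ∑ i, ∑ j, (M i j) ^ 2 = ∑ i, μ i ^ 2 := by
    have h1 : (M * M).trace = ∑ i, μ i ^ 2 := by
      rw [hMM, trace_mul_cycle, hUU, one_mul, trace_diagonal]
    rw [← h1, trace, Finset.sum_congr rfl]
    intro i _
    simp only [diag_apply, mul_apply]
    refine Finset.sum_congr rfl fun j _ => ?_
    have h2 := hM.apply j i
    rw [show M i j * M j i = M i j ^ 2 by rw [← h2]; ring]
  obtain ⟨v, hv0, hvev⟩ := hev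
  have hdet : (M - lam • 1).det = 0 := by
    rw [← Matrix.exists_mulVec_eq_zero_iff]
    refine ⟨v, hv0, ?_⟩
    rw [sub_mulVec, hvev, smul_mulVec, one_mulVec, sub_self]
  have hsmul1 : (lam • 1 : Matrix (Fin n) (Fin n) ℝ) = U * (lam • 1) * star U := by
    rw [Matrix.mul_smul, Matrix.mul_one, Matrix.smul_mul, hUU']
  have hsub : M - lam • 1 = U * diagonal (fun i => μ i - lam) * star U := by
    rw [hspec]
    conv_lhs => rw [hsmul1]
    rw [← Matrix.sub_mul, ← Matrix.mul_sub]
    congr 2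
    rw [show (lam • 1 : Matrix (Fin n) (Fin n) ℝ) = diagonal (fun _ => lam) by
      ext i j; simp [Matrix.one_apply, Matrix.diagonal_apply, mul_ite]]
    rw [diagonal_sub]
  have hprod : ∏ i, (μ i - lam) = 0 := by
    have h0 := hdet
    rw [hsub, det_mul, det_mul, det_diagonal] at h0
    have h1 : U.det * (star U).det = 1 := by rw [← det_mul, hUU', det_one]
    have hU1 : U.det ≠ 0 := fun h => by rw [h, zero_mul] at h1; exact one_ne_zero h1.symm
    have hU2 : (star U).det ≠ 0 := fun h => by rw [h, mul_zero] at h1; exact one_ne_zero h1.symm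
    rcases mul_eq_zero.mp h0 with h | h
    · rcases mul_eq_zero.mp h with h | h
      · exact absurd h hU1
      · exact h
    · exact absurd h hU2
  obtain ⟨k, hk⟩ : ∃ k, μ k = lam := by
    obtain ⟨k, _, hk⟩ := Finset.prod_eq_zero_iff.mp hprod
    exact ⟨k, by linarith [sub_eq_zero.mp hk]⟩
  have hcard : (Finset.univ.erase k).card = n - 1 := by
    rw [Finset.card_erase_of_mem (Finset.mem_univ k), Finset.card_univ, Fintype.card_fin]
  set a : ℝ := ∑ i ∈ Finset.univ.erase k, μ i with ha
  set S : ℝ := ∑ i ∈ Finset.univ.erase k, μ i ^ 2 with hS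
  have hCS : a ^ 2 ≤ ((n : ℝ) - 1) * S := by
    have h3 := sq_sum_le_card_mul_sum_sq (s := Finset.univ.erase k) (f := μ)
    rw [hcard] at h3
    have hn1 : ((n - 1 : ℕ) : ℝ) = (n : ℝ) - 1 := by
      have h4 : 1 ≤ n := by omega
      push_cast [h4]; ring
    calc a ^ 2 ≤ ((n - 1 : ℕ) : ℝ) * S := by exact_mod_cast h3
      _ = ((n : ℝ) - 1) * S := by rw [hn1]
  have hsum_split : M.trace = lam + a := by
    rw [htr, ← Finset.add_sum_erase _ _ (Finset.mem_univ k), hk]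
  have hsq_split : ∑ i, ∑ j, (M i j) ^ 2 = lam ^ 2 + S := by
    rw [hsq, ← Finset.add_sum_erase _ _ (Finset.mem_univ k), hk]
  have hnR : (2 : ℝ) ≤ (n : ℝ) := by exact_mod_cast hn
  have hnpos : (0 : ℝ) < n := by linarith
  rw [hsq_split, hsum_split, ge_iff_le]
  have hfrac : (1 + 1 / (n : ℝ)) * lam ^ 2 = lam ^ 2 + lam ^ 2 / n := by ring
  rw [hfrac]
  have hkey : lam ^ 2 / n ≤ S + (lam + a) ^ 2 := by
    rw [div_le_iff₀ hnpos]
    nlinarith [hCS, sq_nonneg (a + ((n : ℝ) - 1) * (lam + a)), hnR, sq_nonneg (lam + a)]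
  linarith
end

section
/- Let D₁, D₂, D₃, D₄ be diagonal m×m real matrices and A, B ∈ O(m) orthogonal matrices with D₁² = Iₘ + D₃², D₂² = Iₘ + D₄², and D₃AᵀD₂ = D₁BD₄, where all diagonal entries of D₃ and D₄ are nonzero. Then A·D₁⁻²D₃²·Aᵀ = D₂⁻²D₄² and B·D₂⁻²D₄²·Bᵀ = D₁⁻²D₃², and consequently trace(D₁²) = trace(D₂²). -/
/-!
Write the relation as `X := D₁⁻¹ D₃ Aᵀ D₂ = B D₄` and compute `Xᵀ X` both ways: the
orthogonality of `B` and the commutativity of diagonal matrices give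
`D₂ (A D₁⁻² D₃² Aᵀ) D₂ = D₄²`, which is the first identity; the transposed relation gives the second
in the same way. Since `D₁⁻² D₃² = 1 - D₁⁻²`, the first identity says `A D₁⁻² Aᵀ = D₂⁻²`, hence
`A D₁² Aᵀ = D₂²`, and conjugation by an orthogonal matrix preserves the trace.
-/

open Matrix

namespace Matrix

variable {n : Type*} [Fintype n]

theorem transpose_mul_conj_mul_eq {m k l α : Type*} [Fintype m] [Fintype k] [DecidableEq k]
    [Fintype l] [CommSemiring α] {A : Matrix n m α} {P : Matrix l m α} {D : Matrix n n α}
    {B : Matrix l k α} {Q : Matrix k n α} (hB : Bᵀ * B = 1) (h : P * Aᵀ * D = B * Q) :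
    Dᵀ * (A * (Pᵀ * P) * Aᵀ) * D = Qᵀ * Q :=
  calc Dᵀ * (A * (Pᵀ * P) * Aᵀ) * D = (P * Aᵀ * D)ᵀ * (P * Aᵀ * D) := by
        simp only [transpose_mul, transpose_transpose, Matrix.mul_assoc]
    _ = Qᵀ * (Bᵀ * B) * Q := by
        rw [h, transpose_mul]; simp only [Matrix.mul_assoc]
    _ = Qᵀ * Q := by rw [hB, Matrix.mul_one]

variable [DecidableEq n]

section IsDiag

variable {α : Type*}

theorem IsDiag.mul [NonUnitalNonAssocSemiring α] {A B : Matrix n n α} (ha : A.IsDiag)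
    (hb : B.IsDiag) : (A * B).IsDiag := by
  rw [← ha.diagonal_diag, ← hb.diagonal_diag, diagonal_mul_diagonal]
  exact isDiag_diagonal _

theorem IsDiag.commute [CommSemiring α] {A B : Matrix n n α} (ha : A.IsDiag) (hb : B.IsDiag) :
    Commute A B := by
  rw [← ha.diagonal_diag, ← hb.diagonal_diag]
  simp only [Commute, SemiconjBy, diagonal_mul_diagonal, mul_comm]

theorem IsDiag.inv [CommRing α] {A : Matrix n n α} (ha : A.IsDiag) : A⁻¹.IsDiag := by
  rw [← ha.diagonal_diag, inv_diagonal]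
  exact isDiag_diagonal _

end IsDiag

theorem isUnit_det_of_mul_self_eq_one_add_conjTranspose_mul_self {K : Type*} [Field K]
    [PartialOrder K] [StarRing K] [StarOrderedRing K] {C D : Matrix n n K}
    (h : D * D = 1 + Cᴴ * C) : IsUnit D.det := by
  have hDD : IsUnit (D * D) :=
    h ▸ (PosDef.one.add_posSemidef (posSemidef_conjTranspose_mul_self C)).isUnit
  exact (isUnit_iff_isUnit_det D).mp (isUnit_of_mul_isUnit_left hDD)

section Orthogonal

variable {α : Type*} [CommRing α]

theorem trace_mul_mul_transpose {A : Matrix n n α} (hA : Aᵀ * A = 1) (X : Matrix n n α) :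
    trace (A * X * Aᵀ) = trace X := by
  rw [trace_mul_comm, ← Matrix.mul_assoc, hA, Matrix.one_mul]

theorem inv_mul_mul_transpose {A : Matrix n n α} (hA : Aᵀ * A = 1) (X : Matrix n n α) :
    (A * X * Aᵀ)⁻¹ = A * X⁻¹ * Aᵀ := by
  rw [mul_inv_rev, mul_inv_rev, inv_eq_left_inv (mul_eq_one_comm.mp hA), inv_eq_left_inv hA,
    Matrix.mul_assoc]

theorem conj_inv_mul_self_mul_mul_self_eq {D₁ D₂ D₃ D₄ A B : Matrix n n α}
    (hD₁ : D₁.IsDiag) (hD₂ : D₂.IsDiag) (hD₃ : D₃.IsDiag) (hD₄ : D₄.IsDiag)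
    (hB : Bᵀ * B = 1) (hu₁ : IsUnit D₁.det) (hu₂ : IsUnit D₂.det)
    (h : D₃ * Aᵀ * D₂ = D₁ * B * D₄) :
    A * ((D₁ * D₁)⁻¹ * (D₃ * D₃)) * Aᵀ = (D₂ * D₂)⁻¹ * (D₄ * D₄) := by
  have hP : (D₁⁻¹ * D₃)ᵀ * (D₁⁻¹ * D₃) = (D₁ * D₁)⁻¹ * (D₃ * D₃) := by
    rw [(hD₁.inv.mul hD₃).isSymm.eq, (hD₃.commute hD₁.inv).mul_mul_mul_comm, ← mul_inv_rev]
  have h' : D₁⁻¹ * D₃ * Aᵀ * D₂ = B * D₄ := by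
    simp only [Matrix.mul_assoc] at h ⊢
    rw [h, nonsing_inv_mul_cancel_left _ _ hu₁]
  have key := transpose_mul_conj_mul_eq hB h'
  rw [hP, hD₂.isSymm.eq, hD₄.isSymm.eq] at key
  calc A * ((D₁ * D₁)⁻¹ * (D₃ * D₃)) * Aᵀ
      = D₂⁻¹ * (D₂ * (A * ((D₁ * D₁)⁻¹ * (D₃ * D₃)) * Aᵀ) * D₂) * D₂⁻¹ := by
        rw [Matrix.mul_assoc D₂, nonsing_inv_mul_cancel_left _ _ hu₂,
          mul_nonsing_inv_cancel_right _ _ hu₂]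
    _ = D₂⁻¹ * D₂⁻¹ * (D₄ * D₄) := by
        rw [key, Matrix.mul_assoc, ((hD₄.mul hD₄).commute hD₂.inv).eq, Matrix.mul_assoc]
    _ = (D₂ * D₂)⁻¹ * (D₄ * D₄) := by rw [mul_inv_rev]

theorem conj_eq_of_conj_inv_mul_sub_one {A S T : Matrix n n α} (hA : Aᵀ * A = 1)
    (hS : IsUnit S.det) (hT : IsUnit T.det) (h : A * (S⁻¹ * (S - 1)) * Aᵀ = T⁻¹ * (T - 1)) :
    A * S * Aᵀ = T := by
  have inv_mul_sub_one {X : Matrix n n α} (hX : IsUnit X.det) : X⁻¹ * (X - 1) = 1 - X⁻¹ := by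
    rw [Matrix.mul_sub, nonsing_inv_mul _ hX, Matrix.mul_one]
  have hinv : A * S⁻¹ * Aᵀ = T⁻¹ := by
    rw [inv_mul_sub_one hS, inv_mul_sub_one hT, Matrix.mul_sub, Matrix.sub_mul, Matrix.mul_one,
      mul_eq_one_comm.mp hA] at h
    exact sub_right_injective h
  calc A * S * Aᵀ = (A * S⁻¹ * Aᵀ)⁻¹ := by
        rw [inv_mul_mul_transpose hA, nonsing_inv_nonsing_inv _ hS]
    _ = T := by rw [hinv, nonsing_inv_nonsing_inv _ hT]

end Orthogonal

end Matrix

theorem stmt_17_general (m : ℕ) (D₁ D₂ D₃ D₄ A B : Matrix (Fin m) (Fin m) ℝ)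
    (hD₁ : D₁.IsDiag) (hD₂ : D₂.IsDiag) (hD₃ : D₃.IsDiag) (hD₄ : D₄.IsDiag)
    (hA : Aᵀ * A = 1) (hB : Bᵀ * B = 1)
    (h1 : D₁ * D₁ = 1 + D₃ * D₃) (h2 : D₂ * D₂ = 1 + D₄ * D₄)
    (h3 : D₃ * Aᵀ * D₂ = D₁ * B * D₄) :
    A * ((D₁ * D₁)⁻¹ * (D₃ * D₃)) * Aᵀ = (D₂ * D₂)⁻¹ * (D₄ * D₄) ∧
      B * ((D₂ * D₂)⁻¹ * (D₄ * D₄)) * Bᵀ = (D₁ * D₁)⁻¹ * (D₃ * D₃) ∧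
      (D₁ * D₁).trace = (D₂ * D₂).trace := by
  have hu₁ : IsUnit D₁.det := isUnit_det_of_mul_self_eq_one_add_conjTranspose_mul_self
    (C := D₃) (by rwa [conjTranspose_eq_transpose_of_trivial, hD₃.isSymm.eq])
  have hu₂ : IsUnit D₂.det := isUnit_det_of_mul_self_eq_one_add_conjTranspose_mul_self
    (C := D₄) (by rwa [conjTranspose_eq_transpose_of_trivial, hD₄.isSymm.eq])
  have h3t : D₄ * Bᵀ * D₁ = D₂ * A * D₃ := by
    simpa only [transpose_mul, transpose_transpose, hD₁.isSymm.eq, hD₂.isSymm.eq, hD₃.isSymm.eq,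
      hD₄.isSymm.eq, Matrix.mul_assoc] using (congrArg transpose h3).symm
  have hc₁ := conj_inv_mul_self_mul_mul_self_eq hD₁ hD₂ hD₃ hD₄ hB hu₁ hu₂ h3
  have hc₂ := conj_inv_mul_self_mul_mul_self_eq hD₂ hD₁ hD₄ hD₃ hA hu₂ hu₁ h3t
  refine ⟨hc₁, hc₂, ?_⟩
  have hconj : A * (D₁ * D₁) * Aᵀ = D₂ * D₂ := by
    refine conj_eq_of_conj_inv_mul_sub_one hA (by rw [det_mul]; exact hu₁.mul hu₁)
      (by rw [det_mul]; exact hu₂.mul hu₂) ?_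
    rwa [eq_sub_of_add_eq' h1.symm, eq_sub_of_add_eq' h2.symm] at hc₁
  rw [← hconj, trace_mul_mul_transpose hA]

theorem stmt_17 (m : ℕ) (D₁ D₂ D₃ D₄ A B : Matrix (Fin m) (Fin m) ℝ)
    (hD₁ : D₁.IsDiag) (hD₂ : D₂.IsDiag) (hD₃ : D₃.IsDiag) (hD₄ : D₄.IsDiag)
    (hA : Aᵀ * A = 1) (hB : Bᵀ * B = 1)
    (h1 : D₁ * D₁ = 1 + D₃ * D₃) (h2 : D₂ * D₂ = 1 + D₄ * D₄)
    (h3 : D₃ * Aᵀ * D₂ = D₁ * B * D₄)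
    (h3nz : ∀ i, D₃ i i ≠ 0) (h4nz : ∀ i, D₄ i i ≠ 0) :
    A * ((D₁ * D₁)⁻¹ * (D₃ * D₃)) * Aᵀ = (D₂ * D₂)⁻¹ * (D₄ * D₄) ∧
      B * ((D₂ * D₂)⁻¹ * (D₄ * D₄)) * Bᵀ = (D₁ * D₁)⁻¹ * (D₃ * D₃) ∧
      (D₁ * D₁).trace = (D₂ * D₂).trace :=
  stmt_17_general m D₁ D₂ D₃ D₄ A B hD₁ hD₂ hD₃ hD₄ hA hB h1 h2 h3
end
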